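/- In ℂ^n × ℂ with coordinates (z, w), let M = {(z,w) : Im w = 0, ‖z‖² + (Re w)² = 1}. Then M is a compact real analytic submanifold of real codimension 2, whose CR singular points are exactly the two points (0, 1) and (0, −1); moreover H = {(z,w) : Im w = 0, ‖z‖² + (Re w)² ≤ 1} is a compact Levi-flat real analytic hypersurface with boundary with ∂H = M. -/

import Mathlib

open Set Topology

noncomputable section

variable {E : Type*} [NormedAddCommGroup E] [NormedSpace ℝ E]

/-- `Y` is, near `p`, a `d`-dimensional submanifold of class `C^n`, in the sense that some
local `C^n` diffeomorphism of the ambient space flattens `Y` onto a `d`-dimensional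
linear subspace. -/
def SmoothSubmanifoldAt (n : ℕ∞) (d : ℕ) (Y : Set E) (p : E) : Prop :=
  ∃ U V : Set E, IsOpen U ∧ p ∈ U ∧ IsOpen V ∧
    ∃ φ ψ : E → E, ContDiffOn ℝ n φ U ∧ ContDiffOn ℝ n ψ V ∧
      (∀ x ∈ U, φ x ∈ V ∧ ψ (φ x) = x) ∧ (∀ y ∈ V, ψ y ∈ U ∧ φ (ψ y) = y) ∧
      ∃ F : Submodule ℝ E, Module.finrank ℝ F = d ∧ φ '' (Y ∩ U) = V ∩ (F : Set E)

/-- `Y` is an embedded `C^n` submanifold of dimension `d`. -/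
def IsSmoothSubmanifold (n : ℕ∞) (d : ℕ) (Y : Set E) : Prop :=
  ∀ p ∈ Y, SmoothSubmanifoldAt n d Y p

/-- `Y` is, near `p`, a real analytic `d`-dimensional submanifold. -/
def AnalyticSubmanifoldAt (d : ℕ) (Y : Set E) (p : E) : Prop :=
  ∃ U V : Set E, IsOpen U ∧ p ∈ U ∧ IsOpen V ∧
    ∃ φ ψ : E → E, (∀ x ∈ U, AnalyticAt ℝ φ x) ∧ (∀ y ∈ V, AnalyticAt ℝ ψ y) ∧
      (∀ x ∈ U, φ x ∈ V ∧ ψ (φ x) = x) ∧ (∀ y ∈ V, ψ y ∈ U ∧ φ (ψ y) = y) ∧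
      ∃ F : Submodule ℝ E, Module.finrank ℝ F = d ∧ φ '' (Y ∩ U) = V ∩ (F : Set E)

/-- `Y` is an embedded real analytic submanifold of dimension `d`. -/
def IsAnalyticSubmanifold (d : ℕ) (Y : Set E) : Prop :=
  ∀ p ∈ Y, AnalyticSubmanifoldAt d Y p

/-- `Y` is, near `p`, a `C^n` submanifold with boundary `bd`:  a local ambient `C^n`
diffeomorphism flattens `Y` onto a relatively open piece of a closed half-space of a
`d`-dimensional subspace, with `bd` going to the bounding hyperplane. -/
def SmoothSubmanifoldWithBoundaryAt (n : ℕ∞) (d : ℕ) (Y bd : Set E) (p : E) : Prop :=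
  ∃ U V : Set E, IsOpen U ∧ p ∈ U ∧ IsOpen V ∧
    ∃ φ ψ : E → E, ContDiffOn ℝ n φ U ∧ ContDiffOn ℝ n ψ V ∧
      (∀ x ∈ U, φ x ∈ V ∧ ψ (φ x) = x) ∧ (∀ y ∈ V, ψ y ∈ U ∧ φ (ψ y) = y) ∧
      ∃ F : Submodule ℝ E, Module.finrank ℝ F = d ∧
        ∃ ℓ : E →ₗ[ℝ] ℝ, (∃ x ∈ F, ℓ x ≠ 0) ∧
          φ '' (Y ∩ U) = {y ∈ V ∩ (F : Set E) | 0 ≤ ℓ y} ∧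
          φ '' (bd ∩ U) = {y ∈ V ∩ (F : Set E) | ℓ y = 0}

/-- `Y` is a compact-type `C^n` submanifold with boundary `bd` (boundary included in `Y`). -/
def IsSmoothSubmanifoldWithBoundary (n : ℕ∞) (d : ℕ) (Y bd : Set E) : Prop :=
  bd ⊆ Y ∧ ∀ p ∈ Y, SmoothSubmanifoldWithBoundaryAt n d Y bd p

/-- `V` is a real analytic subvariety of the open set `U`: near every point of `U` it is
the common zero set of a family of real analytic functions. -/
def IsAnalyticVarietyIn (U V : Set E) : Prop :=
  V ⊆ U ∧ ∀ p ∈ U, ∃ W, IsOpen W ∧ p ∈ W ∧ W ⊆ U ∧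
    ∃ (ι : Type) (f : ι → E → ℝ), (∀ i, ∀ x ∈ W, AnalyticAt ℝ (f i) x) ∧
      V ∩ W = {x ∈ W | ∀ i, f i x = 0}

/-- `p` is a manifold point of `V` of dimension `d`: near `p`, `V` is a real analytic
submanifold of dimension `d`. -/
def IsManifoldPointOfDim (V : Set E) (p : E) (d : ℕ) : Prop :=
  ∃ W, IsOpen W ∧ p ∈ W ∧ IsAnalyticSubmanifold d (V ∩ W) ∧ p ∈ V

/-- The dimensions of all (analytic) manifold points of `V` are at most `d`. -/
def HasDimAtMost (V : Set E) (d : ℕ) : Prop :=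
  ∀ p ∈ V, ∀ d', IsManifoldPointOfDim V p d' → d' ≤ d

/-- `V` has dimension exactly `d`: the maximum of the dimensions of its manifold points
is `d`. -/
def HasDim (V : Set E) (d : ℕ) : Prop :=
  HasDimAtMost V d ∧ ∃ p ∈ V, IsManifoldPointOfDim V p d

/-- Semianalytic subsets of the open set `W`: generated from `{f > 0}`, `f` real analytic
on `W`, by finite unions, intersections and complements (within `W`). -/
inductive SemianalyticIn (W : Set E) : Set E → Prop
  | pos (f : E → ℝ) (hf : ∀ x ∈ W, AnalyticAt ℝ f x) : SemianalyticIn W {x ∈ W | 0 < f x}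
  | union {A B : Set E} : SemianalyticIn W A → SemianalyticIn W B → SemianalyticIn W (A ∪ B)
  | inter {A B : Set E} : SemianalyticIn W A → SemianalyticIn W B → SemianalyticIn W (A ∩ B)
  | compl {A : Set E} : SemianalyticIn W A → SemianalyticIn W (W \ A)

/-- A semianalytic subset of `ℝ^N`. -/
def Semianalytic (S : Set E) : Prop :=
  ∀ p : E, ∃ W, IsOpen W ∧ p ∈ W ∧ SemianalyticIn W (S ∩ W)

/-- A subanalytic subset of `ℝ^N`: locally the image under the coordinate projection of a
relatively compact semianalytic set. -/
def Subanalytic {N : ℕ} (S : Set (Fin N → ℝ)) : Prop :=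
  ∀ p : Fin N → ℝ, ∃ W, IsOpen W ∧ p ∈ W ∧
    ∃ (M : ℕ) (A : Set (Fin (N + M) → ℝ)), Semianalytic A ∧ IsCompact (closure A) ∧
      S ∩ W = (fun (x : Fin (N + M) → ℝ) (i : Fin N) => x (Fin.castAdd M i)) '' A


section ComplexPart

variable {F : Type*} [NormedAddCommGroup F] [NormedSpace ℂ F]

/-- The Wirtinger derivative of `g` at `p` in the complex direction `v`. -/
def wdir (g : F → ℂ) (v p : F) : ℂ :=
  (fderiv ℝ g p v - Complex.I * fderiv ℝ g p (Complex.I • v)) / 2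

/-- The conjugate Wirtinger derivative of `g` at `p` in the complex direction `v`. -/
def wdirBar (g : F → ℂ) (v p : F) : ℂ :=
  (fderiv ℝ g p v + Complex.I * fderiv ℝ g p (Complex.I • v)) / 2

/-- The set of tangent vectors to the set `M` at `p`: velocities of curves in `M`. -/
def TangentSet (M : Set F) (p : F) : Set F :=
  {v | ∃ γ : ℝ → F, γ 0 = p ∧ HasDerivAt γ v 0 ∧ ∀ᶠ t in nhds (0 : ℝ), γ t ∈ M}

/-- The complex tangent set `T^c_p M = J(T_p M) ∩ T_p M`. -/
def complexTangent (M : Set F) (p : F) : Set F :=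
  {v | v ∈ TangentSet M p ∧ Complex.I • v ∈ TangentSet M p}

/-- The real dimension of the complex tangent space of `M` at `p`. -/
def CRDimAt (M : Set F) (p : F) : ℕ :=
  Module.finrank ℝ (Submodule.span ℝ (complexTangent M p))

/-- `M` is CR near `p`: the dimension of the complex tangent space is locally constant. -/
def IsCRNear (M : Set F) (p : F) : Prop :=
  ∃ W ∈ nhds p, ∃ m, ∀ q ∈ M ∩ W, CRDimAt M q = m

/-- The set of CR singular points of `M`. -/
def crSingularSet (M : Set F) : Set F := {p ∈ M | ¬ IsCRNear M p}

/-- The hypersurface `A` is Levi-flat near `p`: some local `C²` defining function `ρ`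
with nonvanishing differential has Levi form vanishing on complex tangent directions. -/
def LeviFlatAt (A : Set F) (p : F) : Prop :=
  ∃ U, IsOpen U ∧ p ∈ U ∧ ∃ ρ : F → ℝ, ContDiffOn ℝ 2 ρ U ∧
    (∀ x ∈ U, fderiv ℝ ρ x ≠ 0) ∧ A ∩ U = {x ∈ U | ρ x = 0} ∧
    ∀ x ∈ A ∩ U, ∀ w : F, wdir (fun q => (ρ q : ℂ)) w x = 0 →
      wdirBar (fun q => wdir (fun y => (ρ y : ℂ)) w q) w x = 0

/-- The hypersurface `A` is Levi-flat. -/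
def IsLeviFlat (A : Set F) : Prop := ∀ p ∈ A, LeviFlatAt A p

end ComplexPart

section Example

variable {F : Type*} [NormedAddCommGroup F] [NormedSpace ℝ F]

/-- Real analytic version of the flattening with boundary:  `Y` is, near `p`, a real
analytic `d`-dimensional submanifold with boundary `bd`. -/
def AnalyticSubmanifoldWithBoundaryAt (d : ℕ) (Y bd : Set F) (p : F) : Prop :=
  ∃ U V : Set F, IsOpen U ∧ p ∈ U ∧ IsOpen V ∧
    ∃ φ ψ : F → F, (∀ x ∈ U, AnalyticAt ℝ φ x) ∧ (∀ y ∈ V, AnalyticAt ℝ ψ y) ∧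
      (∀ x ∈ U, φ x ∈ V ∧ ψ (φ x) = x) ∧ (∀ y ∈ V, ψ y ∈ U ∧ φ (ψ y) = y) ∧
      ∃ G : Submodule ℝ F, Module.finrank ℝ G = d ∧
        ∃ ℓ : F →ₗ[ℝ] ℝ, (∃ x ∈ G, ℓ x ≠ 0) ∧
          φ '' (Y ∩ U) = {y ∈ V ∩ (G : Set F) | 0 ≤ ℓ y} ∧
          φ '' (bd ∩ U) = {y ∈ V ∩ (G : Set F) | ℓ y = 0}

/-- `Y` is a real analytic submanifold with boundary `bd`. -/
def IsAnalyticSubmanifoldWithBoundary (d : ℕ) (Y bd : Set F) : Prop :=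
  bd ⊆ Y ∧ ∀ p ∈ Y, AnalyticSubmanifoldWithBoundaryAt d Y bd p

/-!
Identify `ℂⁿ × ℂ` isometrically with the Hermitian space `ℂⁿ⁺¹` and put `u = (0, 1)`. Then `M`
and `H` are the unit sphere and the closed unit ball of the real hyperplane
`G = {v | Im ⟪u, v⟫ = 0}`, of real dimension `2n + 1`.

Near the pole `u`, the vertical shift `x ↦ x - √(1 - ‖x - ⟪u, x⟫ u‖²) u` flattens the sphere onto
`uᗮ` and the ball onto a half-space. The reflection in `(p - u)ᗮ` preserves `G`, the sphere and the
ball and moves any `p ∈ M` to `u`, so these charts cover `M`; translations cover `H \ M`.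

The complex tangent space of `M` at `p` is `{v | ⟪u, v⟫ = ⟪p, v⟫ = 0}`, of complex dimension
`n - 1` unless `p ∈ ℂ u`, i.e. `p = ±u`, where it is `n`. Points `p ∉ ℂ u` accumulate at `±u`, so
these two points are exactly the CR singular ones. Finally, `H \ M` is an open piece of
`{Im w = 0}`, whose linear defining function has vanishing Levi form.
-/

lemma image_inter_eq_inter_preimage_of_invOn {α : Type*} {φ ψ : α → α} {U V : Set α}
    (hφ : ∀ x ∈ U, φ x ∈ V ∧ ψ (φ x) = x) (hψ : ∀ y ∈ V, ψ y ∈ U ∧ φ (ψ y) = y)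
    (S : Set α) : φ '' (S ∩ U) = V ∩ ψ ⁻¹' S := by
  ext y
  constructor
  · rintro ⟨x, ⟨hxS, hxU⟩, rfl⟩
    exact ⟨(hφ x hxU).1, by simpa [mem_preimage, (hφ x hxU).2] using hxS⟩
  · rintro ⟨hyV, hyS⟩
    exact ⟨ψ y, ⟨hyS, (hψ y hyV).1⟩, (hψ y hyV).2⟩

section Transport

variable {E₁ E₂ : Type*} [NormedAddCommGroup E₁] [NormedSpace ℝ E₁]
  [NormedAddCommGroup E₂] [NormedSpace ℝ E₂]

lemma ContinuousLinearEquiv.image_conj_preimage_inter (e : E₁ ≃L[ℝ] E₂) (φ : E₂ → E₂)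
    (S U : Set E₂) : (e.symm ∘ φ ∘ e) '' (e ⁻¹' S ∩ e ⁻¹' U) = e ⁻¹' (φ '' (S ∩ U)) := by
  rw [← preimage_inter, image_comp, image_comp, image_preimage_eq _ e.surjective,
    e.image_symm_eq_preimage]

lemma ContinuousLinearEquiv.conj_invOn (e : E₁ ≃L[ℝ] E₂) {φ ψ : E₂ → E₂} {U V : Set E₂}
    (hφ : ∀ x ∈ U, φ x ∈ V ∧ ψ (φ x) = x) :
    ∀ x ∈ e ⁻¹' U, (e.symm ∘ φ ∘ e) x ∈ e ⁻¹' V ∧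
      (e.symm ∘ ψ ∘ e) ((e.symm ∘ φ ∘ e) x) = x := fun x hx ↦ by
  simp [(hφ _ hx).1, (hφ _ hx).2]

lemma ContinuousLinearEquiv.analyticAt_conj (e : E₁ ≃L[ℝ] E₂) {φ : E₂ → E₂} {x : E₁}
    (h : AnalyticAt ℝ φ (e x)) : AnalyticAt ℝ (e.symm ∘ φ ∘ e) x :=
  (e.symm : E₂ →L[ℝ] E₁).analyticAt _ |>.comp (h.comp ((e : E₁ →L[ℝ] E₂).analyticAt x))

lemma AnalyticSubmanifoldAt.preimage (e : E₁ ≃L[ℝ] E₂) {d : ℕ} {Y : Set E₂} {p : E₁}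
    (h : AnalyticSubmanifoldAt d Y (e p)) : AnalyticSubmanifoldAt d (e ⁻¹' Y) p := by
  obtain ⟨U, V, hU, hpU, hV, φ, ψ, hφ, hψ, hφψ, hψφ, F, hF, himg⟩ := h
  refine ⟨e ⁻¹' U, e ⁻¹' V, hU.preimage e.continuous, hpU, hV.preimage e.continuous,
    e.symm ∘ φ ∘ e, e.symm ∘ ψ ∘ e, fun x hx ↦ e.analyticAt_conj (hφ _ hx),
    fun y hy ↦ e.analyticAt_conj (hψ _ hy), e.conj_invOn hφψ, e.conj_invOn hψφ,
    F.map (e.symm.toLinearEquiv : E₂ →ₗ[ℝ] E₁), by rw [LinearEquiv.finrank_map_eq, hF], ?_⟩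
  rw [e.image_conj_preimage_inter, himg, Submodule.map_equiv_eq_comap_symm]
  rfl

lemma AnalyticSubmanifoldWithBoundaryAt.preimage (e : E₁ ≃L[ℝ] E₂) {d : ℕ} {Y bd : Set E₂}
    {p : E₁} (h : AnalyticSubmanifoldWithBoundaryAt d Y bd (e p)) :
    AnalyticSubmanifoldWithBoundaryAt d (e ⁻¹' Y) (e ⁻¹' bd) p := by
  obtain ⟨U, V, hU, hpU, hV, φ, ψ, hφ, hψ, hφψ, hψφ, F, hF, ℓ, ⟨x, hxF, hx⟩, himg, hbd⟩ := h
  refine ⟨e ⁻¹' U, e ⁻¹' V, hU.preimage e.continuous, hpU, hV.preimage e.continuous,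
    e.symm ∘ φ ∘ e, e.symm ∘ ψ ∘ e, fun x hx ↦ e.analyticAt_conj (hφ _ hx),
    fun y hy ↦ e.analyticAt_conj (hψ _ hy), e.conj_invOn hφψ, e.conj_invOn hψφ,
    F.map (e.symm.toLinearEquiv : E₂ →ₗ[ℝ] E₁), by rw [LinearEquiv.finrank_map_eq, hF],
    ℓ ∘ₗ (e : E₁ →ₗ[ℝ] E₂), ⟨e.symm x, ⟨x, hxF, rfl⟩, by simpa using hx⟩, ?_, ?_⟩
  · rw [e.image_conj_preimage_inter, himg, Submodule.map_equiv_eq_comap_symm]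
    rfl
  · rw [e.image_conj_preimage_inter, hbd, Submodule.map_equiv_eq_comap_symm]
    rfl

lemma IsAnalyticSubmanifold.preimage (e : E₁ ≃L[ℝ] E₂) {d : ℕ} {Y : Set E₂}
    (h : IsAnalyticSubmanifold d Y) : IsAnalyticSubmanifold d (e ⁻¹' Y) :=
  fun p hp ↦ (h (e p) hp).preimage e

lemma IsAnalyticSubmanifoldWithBoundary.preimage (e : E₁ ≃L[ℝ] E₂) {d : ℕ} {Y bd : Set E₂}
    (h : IsAnalyticSubmanifoldWithBoundary d Y bd) :
    IsAnalyticSubmanifoldWithBoundary d (e ⁻¹' Y) (e ⁻¹' bd) :=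
  ⟨preimage_mono h.1, fun p hp ↦ (h.2 (e p) hp).preimage e⟩

end Transport

section SphereChart

open Metric Module InnerProductSpace

variable {W : Type*} [NormedAddCommGroup W] [InnerProductSpace ℝ W] {u : W}

def footPoint (u x : W) : W := x - ⟪u, x⟫_ℝ • u

/-- The height above `uᗮ` of the hemisphere `{x ∈ sphere 0 1 | 0 < ⟪u, x⟫}`. -/
def hemisphereHeight (u x : W) : ℝ := √(1 - ‖footPoint u x‖ ^ 2)

def sphereChart (u x : W) : W := x - hemisphereHeight u x • u

def sphereChartInv (u y : W) : W := y + hemisphereHeight u y • u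

def sphereChartSource (u : W) : Set W := {x | ‖footPoint u x‖ < 1 ∧ 0 < ⟪u, x⟫_ℝ}

def sphereChartTarget (u : W) : Set W :=
  {y | ‖footPoint u y‖ < 1 ∧ 0 < ⟪u, y⟫_ℝ + hemisphereHeight u y}

lemma inner_add_smul_of_norm_eq_one (hu : ‖u‖ = 1) (x : W) (c : ℝ) :
    ⟪u, x + c • u⟫_ℝ = ⟪u, x⟫_ℝ + c := by
  rw [inner_add_right, real_inner_smul_right, real_inner_self_eq_norm_sq, hu]
  ring

lemma footPoint_add_smul (hu : ‖u‖ = 1) (x : W) (c : ℝ) :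
    footPoint u (x + c • u) = footPoint u x := by
  rw [footPoint, footPoint, inner_add_smul_of_norm_eq_one hu, add_smul,
    add_sub_add_right_eq_sub]

lemma hemisphereHeight_add_smul (hu : ‖u‖ = 1) (x : W) (c : ℝ) :
    hemisphereHeight u (x + c • u) = hemisphereHeight u x := by
  rw [hemisphereHeight, hemisphereHeight, footPoint_add_smul hu]

lemma norm_sq_eq_footPoint_sq_add (hu : ‖u‖ = 1) (x : W) :
    ‖x‖ ^ 2 = ‖footPoint u x‖ ^ 2 + ⟪u, x⟫_ℝ ^ 2 := by
  rw [footPoint, norm_sub_sq_real, norm_smul, hu, real_inner_smul_right, real_inner_comm,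
    Real.norm_eq_abs, mul_one, sq_abs]
  ring

lemma hemisphereHeight_nonneg (x : W) : 0 ≤ hemisphereHeight u x := Real.sqrt_nonneg _

lemma hemisphereHeight_sq {x : W} (hx : ‖footPoint u x‖ < 1) :
    hemisphereHeight u x ^ 2 = 1 - ‖footPoint u x‖ ^ 2 :=
  Real.sq_sqrt (by nlinarith [norm_nonneg (footPoint u x)])

lemma sphereChart_mapsTo (hu : ‖u‖ = 1) {x : W} (hx : x ∈ sphereChartSource u) :
    sphereChart u x ∈ sphereChartTarget u ∧ sphereChartInv u (sphereChart u x) = x := by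
  have hφ : sphereChart u x = x + (-hemisphereHeight u x) • u := by
    rw [sphereChart, neg_smul, sub_eq_add_neg]
  refine ⟨⟨?_, ?_⟩, ?_⟩
  · rw [hφ, footPoint_add_smul hu]
    exact hx.1
  · rw [hφ, inner_add_smul_of_norm_eq_one hu, hemisphereHeight_add_smul hu]
    linarith [hx.2]
  · rw [sphereChartInv, hφ, hemisphereHeight_add_smul hu, neg_smul, neg_add_cancel_right]

lemma sphereChartInv_mapsTo (hu : ‖u‖ = 1) {y : W} (hy : y ∈ sphereChartTarget u) :
    sphereChartInv u y ∈ sphereChartSource u ∧ sphereChart u (sphereChartInv u y) = y := by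
  refine ⟨⟨?_, ?_⟩, ?_⟩
  · rw [sphereChartInv, footPoint_add_smul hu]
    exact hy.1
  · rw [sphereChartInv, inner_add_smul_of_norm_eq_one hu]
    exact hy.2
  · rw [sphereChart, sphereChartInv, hemisphereHeight_add_smul hu, add_sub_cancel_right]

lemma norm_sphereChartInv_sq (hu : ‖u‖ = 1) {y : W} (hy : ‖footPoint u y‖ < 1) :
    ‖sphereChartInv u y‖ ^ 2 = 1 + ⟪u, y⟫_ℝ * (⟪u, y⟫_ℝ + 2 * hemisphereHeight u y) := by
  rw [norm_sq_eq_footPoint_sq_add hu, sphereChartInv, footPoint_add_smul hu,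
    inner_add_smul_of_norm_eq_one hu]
  linear_combination hemisphereHeight_sq hy

lemma norm_sphereChartInv_le_one_iff (hu : ‖u‖ = 1) {y : W} (hy : y ∈ sphereChartTarget u) :
    ‖sphereChartInv u y‖ ≤ 1 ↔ ⟪u, y⟫_ℝ ≤ 0 := by
  have h := norm_sphereChartInv_sq hu hy.1
  have hpos : 0 < ⟪u, y⟫_ℝ + 2 * hemisphereHeight u y := by
    linarith [hy.2, hemisphereHeight_nonneg (u := u) y]
  rw [← sq_le_one_iff₀ (norm_nonneg _), h, add_le_iff_nonpos_right]
  exact ⟨fun hle ↦ by nlinarith, fun hle ↦ by nlinarith⟩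

lemma norm_sphereChartInv_eq_one_iff (hu : ‖u‖ = 1) {y : W} (hy : y ∈ sphereChartTarget u) :
    ‖sphereChartInv u y‖ = 1 ↔ ⟪u, y⟫_ℝ = 0 := by
  have h := norm_sphereChartInv_sq hu hy.1
  have hpos : 0 < ⟪u, y⟫_ℝ + 2 * hemisphereHeight u y := by
    linarith [hy.2, hemisphereHeight_nonneg (u := u) y]
  rw [← pow_eq_one_iff_of_nonneg (norm_nonneg _) two_ne_zero, h, add_eq_left, mul_eq_zero,
    or_iff_left hpos.ne']

lemma continuous_footPoint : Continuous (footPoint u) := by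
  unfold footPoint
  fun_prop

lemma continuous_hemisphereHeight : Continuous (hemisphereHeight u) :=
  Real.continuous_sqrt.comp (continuous_const.sub (continuous_footPoint.norm.pow 2))

lemma isOpen_sphereChartSource : IsOpen (sphereChartSource u) :=
  (isOpen_lt (continuous_footPoint.norm) continuous_const).inter
    (isOpen_lt continuous_const (continuous_const.inner continuous_id :
      Continuous fun x : W ↦ ⟪u, x⟫_ℝ))

lemma isOpen_sphereChartTarget : IsOpen (sphereChartTarget u) :=
  (isOpen_lt (continuous_footPoint.norm) continuous_const).inter
    (isOpen_lt continuous_const ((continuous_const.inner continuous_id).add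
      continuous_hemisphereHeight))

lemma contDiffAt_hemisphereHeight {x : W} (hx : ‖footPoint u x‖ < 1) :
    ContDiffAt ℝ ω (hemisphereHeight u) x := by
  have hfoot : ContDiff ℝ ω (footPoint u) :=
    contDiff_id.sub ((contDiff_const.inner ℝ contDiff_id).smul contDiff_const)
  refine ContDiffAt.sqrt (contDiffAt_const.sub (hfoot.norm_sq ℝ).contDiffAt) ?_
  nlinarith [norm_nonneg (footPoint u x)]

lemma analyticAt_sphereChart {x : W} (hx : ‖footPoint u x‖ < 1) :
    AnalyticAt ℝ (sphereChart u) x :=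
  (contDiffAt_id.sub ((contDiffAt_hemisphereHeight hx).smul contDiffAt_const)).analyticAt

lemma analyticAt_sphereChartInv {y : W} (hy : ‖footPoint u y‖ < 1) :
    AnalyticAt ℝ (sphereChartInv u) y :=
  (contDiffAt_id.add ((contDiffAt_hemisphereHeight hy).smul contDiffAt_const)).analyticAt

lemma mem_sphereChartSource_self (hu : ‖u‖ = 1) : u ∈ sphereChartSource u := by
  simp [sphereChartSource, footPoint, hu]

lemma footPoint_eq_zero_iff (hu : ‖u‖ = 1) {p : W} (hp : p ∈ sphere (0 : W) 1) :
    footPoint u p = 0 ↔ p = u ∨ p = -u := by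
  constructor
  · intro h
    have hsq := norm_sq_eq_footPoint_sq_add hu p
    rw [h, mem_sphere_zero_iff_norm.1 hp, norm_zero] at hsq
    have hp' : p = ⟪u, p⟫_ℝ • u := sub_eq_zero.1 h
    rcases sq_eq_one_iff.1 (by linarith : ⟪u, p⟫_ℝ ^ 2 = 1) with h1 | h1
    · exact Or.inl (by rw [hp', h1, one_smul])
    · exact Or.inr (by rw [hp', h1, neg_one_smul])
  · rintro (rfl | rfl) <;> simp [footPoint, hu]

lemma HasDerivAt.footPoint {γ : ℝ → W} {v : W} {t : ℝ} (hγ : HasDerivAt γ v t) :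
    HasDerivAt (fun s ↦ footPoint u (γ s)) (footPoint u v) t :=
  (hγ.sub (((hasDerivAt_const t u).inner ℝ hγ).smul_const u)).congr_deriv
    (by simp [_root_.footPoint])

end SphereChart

section SphereInterSubspace

open Metric Module InnerProductSpace Submodule

variable {W : Type*} [NormedAddCommGroup W] [InnerProductSpace ℝ W] {G : Submodule ℝ W} {u : W}

lemma sphereChartInv_mem_iff (huG : u ∈ G) (y : W) : sphereChartInv u y ∈ G ↔ y ∈ G :=
  G.add_mem_iff_left (G.smul_mem _ huG)

lemma finrank_orthogonal_span_singleton_inf [FiniteDimensional ℝ G] (hu : u ≠ 0)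
    (huG : u ∈ G) : finrank ℝ ((ℝ ∙ u)ᗮ ⊓ G : Submodule ℝ W) = finrank ℝ G - 1 := by
  have h := Submodule.finrank_add_inf_finrank_orthogonal
    ((Submodule.span_singleton_le_iff_mem u G).2 huG)
  rw [finrank_span_singleton hu] at h
  omega

lemma analyticSubmanifoldAt_sphere_inter_self [FiniteDimensional ℝ G] (hu : ‖u‖ = 1)
    (huG : u ∈ G) : AnalyticSubmanifoldAt (finrank ℝ G - 1) (sphere 0 1 ∩ G) u := by
  refine ⟨sphereChartSource u, sphereChartTarget u, isOpen_sphereChartSource,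
    mem_sphereChartSource_self hu, isOpen_sphereChartTarget, sphereChart u, sphereChartInv u,
    fun x hx ↦ analyticAt_sphereChart hx.1, fun y hy ↦ analyticAt_sphereChartInv hy.1,
    fun x hx ↦ sphereChart_mapsTo hu hx, fun y hy ↦ sphereChartInv_mapsTo hu hy,
    (ℝ ∙ u)ᗮ ⊓ G, finrank_orthogonal_span_singleton_inf (norm_ne_zero_iff.1 (by simp [hu])) huG,
    ?_⟩
  rw [image_inter_eq_inter_preimage_of_invOn (fun x hx ↦ sphereChart_mapsTo hu hx)
    (fun y hy ↦ sphereChartInv_mapsTo hu hy)]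
  ext y
  simp only [mem_inter_iff, mem_preimage, mem_sphere_zero_iff_norm, SetLike.mem_coe,
    Submodule.mem_inf, Submodule.mem_orthogonal_singleton_iff_inner_right]
  exact and_congr_right fun hy ↦
    and_congr (norm_sphereChartInv_eq_one_iff hu hy) (sphereChartInv_mem_iff huG y)

lemma analyticSubmanifoldWithBoundaryAt_closedBall_inter_self (hu : ‖u‖ = 1) (huG : u ∈ G) :
    AnalyticSubmanifoldWithBoundaryAt (finrank ℝ G) (closedBall 0 1 ∩ G)
      (sphere 0 1 ∩ G) u := by
  have hchart := image_inter_eq_inter_preimage_of_invOn (fun x hx ↦ sphereChart_mapsTo hu hx)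
    (fun y hy ↦ sphereChartInv_mapsTo hu hy)
  refine ⟨sphereChartSource u, sphereChartTarget u, isOpen_sphereChartSource,
    mem_sphereChartSource_self hu, isOpen_sphereChartTarget, sphereChart u, sphereChartInv u,
    fun x hx ↦ analyticAt_sphereChart hx.1, fun y hy ↦ analyticAt_sphereChartInv hy.1,
    fun x hx ↦ sphereChart_mapsTo hu hx, fun y hy ↦ sphereChartInv_mapsTo hu hy,
    G, rfl, -innerₛₗ ℝ u, ⟨u, huG, by simp [hu]⟩, ?_, ?_⟩
  · rw [hchart]
    ext y
    simp only [mem_inter_iff, mem_preimage, mem_closedBall_zero_iff, SetLike.mem_coe,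
      mem_ofPred_eq, LinearMap.neg_apply, innerₛₗ_apply_apply, neg_nonneg]
    rw [and_assoc]
    exact and_congr_right fun hy ↦ by
      rw [norm_sphereChartInv_le_one_iff hu hy, sphereChartInv_mem_iff huG, and_comm]
  · rw [hchart]
    ext y
    simp only [mem_inter_iff, mem_preimage, mem_sphere_zero_iff_norm, SetLike.mem_coe,
      mem_ofPred_eq, LinearMap.neg_apply, innerₛₗ_apply_apply, neg_eq_zero]
    rw [and_assoc]
    exact and_congr_right fun hy ↦ by
      rw [norm_sphereChartInv_eq_one_iff hu hy, sphereChartInv_mem_iff huG, and_comm]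

lemma analyticSubmanifoldWithBoundaryAt_closedBall_inter_of_norm_lt_one (hu : ‖u‖ = 1)
    (huG : u ∈ G) {p : W} (hp : ‖p‖ < 1) :
    AnalyticSubmanifoldWithBoundaryAt (finrank ℝ G) (closedBall 0 1 ∩ G)
      (sphere 0 1 ∩ G) p := by
  have hφ : ∀ x ∈ ball (0 : W) 1, x + (2 : ℝ) • u ∈ ball ((2 : ℝ) • u) 1 ∧
      x + (2 : ℝ) • u - (2 : ℝ) • u = x := fun x hx ↦ by simpa using hx
  have hψ : ∀ y ∈ ball ((2 : ℝ) • u) 1, y - (2 : ℝ) • u ∈ ball (0 : W) 1 ∧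
      y - (2 : ℝ) • u + (2 : ℝ) • u = y := fun y hy ↦
    ⟨by rwa [mem_ball_zero_iff, ← mem_ball_iff_norm], sub_add_cancel y _⟩
  have hchart := image_inter_eq_inter_preimage_of_invOn (φ := (· + (2 : ℝ) • u))
    (ψ := (· - (2 : ℝ) • u)) hφ hψ
  have hpos : ∀ y ∈ ball ((2 : ℝ) • u) 1, 0 < ⟪u, y⟫_ℝ := fun y hy ↦ by
    have h := abs_real_inner_le_norm u (y - (2 : ℝ) • u)
    rw [hu, one_mul, inner_sub_right, real_inner_smul_right, real_inner_self_eq_norm_sq, hu]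
      at h
    rw [mem_ball_iff_norm] at hy
    linarith [neg_abs_le (⟪u, y⟫_ℝ - 2 * 1 ^ 2)]
  refine ⟨ball 0 1, ball ((2 : ℝ) • u) 1, isOpen_ball, mem_ball_zero_iff.2 hp, isOpen_ball,
    (· + (2 : ℝ) • u), (· - (2 : ℝ) • u), fun _ _ ↦ analyticAt_id.add analyticAt_const,
    fun _ _ ↦ analyticAt_id.sub analyticAt_const, hφ, hψ, G, rfl, innerₛₗ ℝ u,
    ⟨u, huG, by simp [hu]⟩, ?_, ?_⟩
  · rw [hchart]
    ext y
    simp only [mem_inter_iff, mem_preimage, mem_closedBall_zero_iff, SetLike.mem_coe,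
      mem_ofPred_eq, innerₛₗ_apply_apply]
    rw [and_assoc, G.sub_mem_iff_left (G.smul_mem _ huG)]
    exact and_congr_right fun hy ↦
      ⟨fun h ↦ ⟨h.2, (hpos y hy).le⟩, fun h ↦ ⟨(mem_ball_iff_norm.1 hy).le, h.1⟩⟩
  · rw [hchart]
    ext y
    simp only [mem_inter_iff, mem_preimage, mem_sphere_zero_iff_norm, SetLike.mem_coe,
      mem_ofPred_eq, innerₛₗ_apply_apply]
    rw [and_assoc]
    exact and_congr_right fun hy ↦ iff_of_false (fun h ↦ (mem_ball_iff_norm.1 hy).ne h.1)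
      (fun h ↦ (hpos y hy).ne' h.2)

lemma exists_linearIsometryEquiv_apply_eq {p : W} (hpG : p ∈ G) (huG : u ∈ G)
    (hpu : ‖p‖ = ‖u‖) : ∃ R : W ≃ₗᵢ[ℝ] W, R p = u ∧ ∀ S : Set W, R ⁻¹' (S ∩ G) = R ⁻¹' S ∩ G := by
  refine ⟨reflection (ℝ ∙ (p - u))ᗮ, reflection_sub hpu, fun S ↦ ?_⟩
  ext x
  refine and_congr_right' ?_
  rw [SetLike.mem_coe, reflection_orthogonal_apply, reflection_singleton_apply, neg_sub]
  exact G.sub_mem_iff_left (G.smul_of_tower_mem _ (G.smul_mem _ (G.sub_mem hpG huG)))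

theorem isAnalyticSubmanifold_sphere_inter [FiniteDimensional ℝ G] (hu : ‖u‖ = 1)
    (huG : u ∈ G) : IsAnalyticSubmanifold (finrank ℝ G - 1) (sphere (0 : W) 1 ∩ G) := by
  intro p hp
  obtain ⟨R, hRp, hRG⟩ :=
    exists_linearIsometryEquiv_apply_eq hp.2 huG (by rw [mem_sphere_zero_iff_norm.1 hp.1, hu])
  have h := AnalyticSubmanifoldAt.preimage R.toContinuousLinearEquiv (p := p)
    (hRp ▸ analyticSubmanifoldAt_sphere_inter_self hu huG)
  rwa [LinearIsometryEquiv.coe_toContinuousLinearEquiv, hRG, LinearIsometryEquiv.preimage_sphere,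
    map_zero] at h

theorem isAnalyticSubmanifoldWithBoundary_closedBall_inter (hu : ‖u‖ = 1) (huG : u ∈ G) :
    IsAnalyticSubmanifoldWithBoundary (finrank ℝ G) (closedBall (0 : W) 1 ∩ G)
      (sphere 0 1 ∩ G) := by
  refine ⟨inter_subset_inter_left _ sphere_subset_closedBall, fun p hp ↦ ?_⟩
  rcases (mem_closedBall_zero_iff.1 hp.1).lt_or_eq with hlt | hp1
  · exact analyticSubmanifoldWithBoundaryAt_closedBall_inter_of_norm_lt_one hu huG hlt
  obtain ⟨R, hRp, hRG⟩ := exists_linearIsometryEquiv_apply_eq hp.2 huG (by rw [hp1, hu])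
  have h := AnalyticSubmanifoldWithBoundaryAt.preimage R.toContinuousLinearEquiv (p := p)
    (hRp ▸ analyticSubmanifoldWithBoundaryAt_closedBall_inter_self hu huG)
  rwa [LinearIsometryEquiv.coe_toContinuousLinearEquiv, hRG, hRG,
    LinearIsometryEquiv.preimage_sphere, LinearIsometryEquiv.preimage_closedBall, map_zero] at h

end SphereInterSubspace

section CRTransport

variable {V V' : Type*} [NormedAddCommGroup V] [NormedSpace ℂ V]
  [NormedAddCommGroup V'] [NormedSpace ℂ V']

lemma mem_tangentSet_of_mapsTo (L : V →L[ℝ] V') {S : Set V} {T : Set V'} (hST : MapsTo L S T)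
    {p v : V} (hv : v ∈ TangentSet S p) : L v ∈ TangentSet T (L p) := by
  obtain ⟨γ, hγ0, hγ, hγS⟩ := hv
  exact ⟨L ∘ γ, by simp [hγ0], L.hasFDerivAt.comp_hasDerivAt 0 hγ, hγS.mono fun _ h ↦ hST h⟩

lemma tangentSet_preimage (e : V ≃L[ℂ] V') (S : Set V') (p : V) :
    TangentSet (e ⁻¹' S) p = e ⁻¹' TangentSet S (e p) := by
  ext v
  refine ⟨mem_tangentSet_of_mapsTo ((e : V →L[ℂ] V').restrictScalars ℝ) fun _ h ↦ h, fun hv ↦ ?_⟩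
  simpa using mem_tangentSet_of_mapsTo ((e.symm : V' →L[ℂ] V).restrictScalars ℝ)
    (S := S) (T := e ⁻¹' S) (fun x hx ↦ by simpa using hx) hv

lemma complexTangent_preimage (e : V ≃L[ℂ] V') (S : Set V') (p : V) :
    complexTangent (e ⁻¹' S) p = e ⁻¹' complexTangent S (e p) := by
  ext v
  simp [complexTangent, tangentSet_preimage]

lemma crDimAt_preimage (e : V ≃L[ℂ] V') (S : Set V') (p : V) :
    CRDimAt (e ⁻¹' S) p = CRDimAt S (e p) := by
  let L : V' ≃ₗ[ℝ] V := (e.symm.toLinearEquiv).restrictScalars ℝ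
  rw [CRDimAt, CRDimAt, complexTangent_preimage, ← e.image_symm_eq_preimage,
    show ⇑e.symm = ⇑(L : V' →ₗ[ℝ] V) from rfl, Submodule.span_image,
    LinearEquiv.finrank_map_eq]

lemma IsCRNear.preimage (e : V ≃L[ℂ] V') {S : Set V'} {p : V} (h : IsCRNear S (e p)) :
    IsCRNear (e ⁻¹' S) p := by
  obtain ⟨N, hN, m, hm⟩ := h
  exact ⟨e ⁻¹' N, e.continuous.continuousAt.preimage_mem_nhds hN, m,
    fun q hq ↦ (crDimAt_preimage e S q).trans (hm (e q) hq)⟩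

lemma crSingularSet_preimage (e : V ≃L[ℂ] V') (S : Set V') :
    crSingularSet (e ⁻¹' S) = e ⁻¹' crSingularSet S := by
  ext p
  refine and_congr_right' (not_congr ⟨fun h ↦ ?_, IsCRNear.preimage e⟩)
  simpa using IsCRNear.preimage e.symm (S := e ⁻¹' S) (p := e p) (by simpa using h)

end CRTransport

lemma HasDerivAt.mem_of_eventually_mem {V : Type*} [NormedAddCommGroup V] [NormedSpace ℝ V]
    {G : Submodule ℝ V} (hG : IsClosed (G : Set V)) {γ : ℝ → V} {v : V} {t₀ : ℝ}
    (hγ : HasDerivAt γ v t₀) (hγG : ∀ᶠ t in 𝓝 t₀, γ t ∈ G) : v ∈ G := by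
  refine hG.mem_of_tendsto (hasDerivAt_iff_tendsto_slope.1 hγ) ?_
  filter_upwards [nhdsWithin_le_nhds hγG] with t ht
  rw [slope_def_module]
  exact G.smul_mem _ (G.sub_mem ht hγG.self_of_nhds)

lemma finrank_real_span_coe_submodule {V : Type*} [NormedAddCommGroup V] [NormedSpace ℂ V]
    (N : Submodule ℂ V) : Module.finrank ℝ (Submodule.span ℝ (N : Set V)) =
      2 * Module.finrank ℂ N := by
  rw [show (N : Set V) = (N.restrictScalars ℝ : Set V) from rfl, Submodule.span_eq]
  exact finrank_real_of_complex N

section SphereCR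

open Metric Module InnerProductSpace Filter Submodule

variable {W : Type*} [NormedAddCommGroup W] [InnerProductSpace ℂ W] {u : W}

attribute [local instance] InnerProductSpace.complexToReal

lemma mem_tangentSet_sphere_inter {G : Submodule ℝ W} {p v : W} (hp : p ∈ sphere (0 : W) 1 ∩ G)
    (hvG : v ∈ G) (hpv : ⟪p, v⟫_ℝ = 0) : v ∈ TangentSet (sphere 0 1 ∩ G) p := by
  have hp1 : ‖p‖ = 1 := mem_sphere_zero_iff_norm.1 hp.1
  -- `‖p + t • v‖ = √(1 + t² ‖v‖²)` is even in `t`, so normalising `p + t • v` keeps velocity `v`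
  have hline : HasDerivAt (fun t : ℝ ↦ p + t • v) v 0 := by
    simpa using ((hasDerivAt_id (0 : ℝ)).smul_const v).const_add p
  have hne : ∀ t : ℝ, p + t • v ≠ 0 := fun t h ↦ by
    have hsq := norm_add_sq_real p (t • v)
    rw [h, norm_zero, hp1, real_inner_smul_right, hpv, norm_smul] at hsq
    nlinarith [sq_nonneg (‖t‖ * ‖v‖)]
  have hscale : HasDerivAt (fun t : ℝ ↦ ‖p + t • v‖⁻¹) 0 0 := by
    have h := (hline.norm_sq.sqrt (by simp [hp1])).inv (by simp [hp1])
    simp only [Real.sqrt_sq (norm_nonneg _)] at h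
    simpa [hpv, Pi.inv_def] using h
  refine ⟨fun t ↦ ‖p + t • v‖⁻¹ • (p + t • v), by simp [hp1],
    (hscale.smul hline).congr_deriv (by simp [hp1]), Eventually.of_forall fun t ↦ ⟨?_, ?_⟩⟩
  · exact mem_sphere_zero_iff_norm.2 (norm_smul_inv_norm (hne t))
  · exact G.smul_mem _ (G.add_mem hp.2 (G.smul_mem t hvG))

lemma tangentSet_sphere_inter {G : Submodule ℝ W} (hG : IsClosed (G : Set W)) {p : W}
    (hp : p ∈ sphere (0 : W) 1 ∩ G) :
    TangentSet (sphere 0 1 ∩ G) p = {v | v ∈ G ∧ ⟪p, v⟫_ℝ = 0} := by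
  refine Set.ext fun v ↦ ⟨fun ⟨γ, hγ0, hγ, hγS⟩ ↦ ?_, fun ⟨hvG, hpv⟩ ↦
    mem_tangentSet_sphere_inter hp hvG hpv⟩
  refine ⟨hγ.mem_of_eventually_mem hG (hγS.mono fun _ h ↦ h.2), ?_⟩
  have hconst : HasDerivAt (‖γ ·‖ ^ 2) 0 0 :=
    (hasDerivAt_const 0 (1 : ℝ)).congr_of_eventuallyEq
      (hγS.mono fun t ht ↦ by simp [mem_sphere_zero_iff_norm.1 ht.1])
  have h := hγ.norm_sq.unique hconst
  rw [hγ0] at h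
  linarith

lemma complexTangent_sphere_inter {G : Submodule ℝ W} (hG : IsClosed (G : Set W)) {p : W}
    (hp : p ∈ sphere (0 : W) 1 ∩ G) :
    complexTangent (sphere 0 1 ∩ G) p = {v | v ∈ G ∧ Complex.I • v ∈ G ∧ ⟪p, v⟫_ℂ = 0} := by
  ext v
  have hre : ⟪p, v⟫_ℝ = (⟪p, v⟫_ℂ).re := rfl
  have hI : ⟪p, Complex.I • v⟫_ℝ = -(⟪p, v⟫_ℂ).im := by
    simp [real_inner_eq_re_inner ℂ, inner_smul_right]
  simp only [complexTangent, tangentSet_sphere_inter hG hp, mem_ofPred_eq, hre, hI, neg_eq_zero,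
    Complex.ext_iff, Complex.zero_re, Complex.zero_im]
  tauto

def realHyperplane (u : W) : Submodule ℝ W :=
  LinearMap.ker (Complex.imLm ∘ₗ (innerₛₗ ℂ u).restrictScalars ℝ)

lemma mem_realHyperplane {v : W} : v ∈ realHyperplane u ↔ (⟪u, v⟫_ℂ).im = 0 := Iff.rfl

lemma finrank_realHyperplane [FiniteDimensional ℂ W] (hu : u ≠ 0) :
    finrank ℝ (realHyperplane u) = 2 * finrank ℂ W - 1 := by
  let f : W →ₗ[ℝ] ℝ := Complex.imLm ∘ₗ (innerₛₗ ℂ u).restrictScalars ℝ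
  have hfu : f (Complex.I • u) = ‖u‖ ^ 2 := by
    simp [f, inner_smul_right, inner_self_eq_norm_sq_to_K, ← Complex.ofReal_pow]
  have hsurj : Function.Surjective f := fun r ↦
    ⟨(r / ‖u‖ ^ 2) • Complex.I • u, by rw [map_smul, hfu, smul_eq_mul, div_mul_cancel₀ _
      (pow_ne_zero 2 (norm_ne_zero_iff.2 hu))]⟩
  have h := LinearMap.finrank_range_add_finrank_ker f
  rw [LinearMap.range_eq_top.2 hsurj, finrank_top, finrank_self,
    finrank_real_of_complex] at h
  change finrank ℝ (LinearMap.ker f) = _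
  omega

lemma self_mem_realHyperplane (u : W) : u ∈ realHyperplane u := by
  simp [mem_realHyperplane, inner_self_eq_norm_sq_to_K, ← Complex.ofReal_pow]

lemma mem_realHyperplane_and_I_smul_mem_iff {v : W} :
    v ∈ realHyperplane u ∧ Complex.I • v ∈ realHyperplane u ↔ ⟪u, v⟫_ℂ = 0 := by
  simp [mem_realHyperplane, Complex.ext_iff, and_comm]

lemma inner_footPoint_left {p v : W} (huv : ⟪u, v⟫_ℂ = 0) :
    ⟪footPoint u p, v⟫_ℂ = ⟪p, v⟫_ℂ := by
  rw [footPoint, inner_sub_left, RCLike.real_smul_eq_coe_smul (K := ℂ), inner_smul_real_left,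
    huv, smul_zero, sub_zero]

lemma footPoint_mem_orthogonal (hu : ‖u‖ = 1) {p : W} (hp : p ∈ realHyperplane u) :
    footPoint u p ∈ (ℂ ∙ u)ᗮ := by
  rw [mem_orthogonal_singleton_iff_inner_right, footPoint, inner_sub_right,
    RCLike.real_smul_eq_coe_smul (K := ℂ), inner_smul_right, inner_self_eq_norm_sq_to_K, hu]
  apply Complex.ext <;> simp [real_inner_eq_re_inner ℂ, mem_realHyperplane.1 hp]

lemma complexTangent_sphere_inter_realHyperplane [FiniteDimensional ℂ W] {p : W}
    (hp : p ∈ sphere (0 : W) 1 ∩ realHyperplane u) :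
    complexTangent (sphere 0 1 ∩ realHyperplane u) p =
      ((ℂ ∙ footPoint u p)ᗮ ⊓ (ℂ ∙ u)ᗮ : Submodule ℂ W) := by
  rw [complexTangent_sphere_inter (realHyperplane u).closed_of_finiteDimensional hp]
  ext v
  simp only [mem_ofPred_eq, ← and_assoc, mem_realHyperplane_and_I_smul_mem_iff, SetLike.mem_coe,
    mem_inf, mem_orthogonal_singleton_iff_inner_right]
  exact ⟨fun ⟨huv, hpv⟩ ↦ ⟨by rwa [inner_footPoint_left huv], huv⟩,
    fun ⟨hfv, huv⟩ ↦ ⟨huv, by rwa [inner_footPoint_left huv] at hfv⟩⟩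

lemma crDimAt_sphere_inter_realHyperplane [FiniteDimensional ℂ W] (hu : ‖u‖ = 1) {p : W}
    (hp : p ∈ sphere (0 : W) 1 ∩ realHyperplane u) :
    CRDimAt (sphere 0 1 ∩ realHyperplane u) p + 2 * finrank ℂ (ℂ ∙ footPoint u p) + 2 =
      2 * finrank ℂ W := by
  have h₁ := finrank_add_inf_finrank_orthogonal
    ((span_singleton_le_iff_mem _ _).2 (footPoint_mem_orthogonal hu hp.2))
  have h₂ := finrank_add_finrank_orthogonal (ℂ ∙ u)
  rw [finrank_span_singleton (norm_ne_zero_iff.1 (by simp [hu]))] at h₂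
  rw [CRDimAt, complexTangent_sphere_inter_realHyperplane hp, finrank_real_span_coe_submodule]
  omega

lemma isCRNear_of_footPoint_ne_zero [FiniteDimensional ℂ W] (hu : ‖u‖ = 1) {p : W}
    (hp : footPoint u p ≠ 0) : IsCRNear (sphere 0 1 ∩ realHyperplane u) p := by
  refine ⟨{x | footPoint u x ≠ 0},
    (isOpen_ne_fun continuous_footPoint continuous_const).mem_nhds hp, 2 * finrank ℂ W - 4,
    fun q ⟨hqS, hq⟩ ↦ ?_⟩
  have h := crDimAt_sphere_inter_realHyperplane hu hqS
  rw [finrank_span_singleton hq] at h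
  omega

lemma exists_mem_footPoint_ne_zero [FiniteDimensional ℂ W] (hW : 1 < finrank ℂ W)
    (hu : ‖u‖ = 1) {p : W} (hp : p ∈ sphere (0 : W) 1 ∩ realHyperplane u)
    (hp0 : footPoint u p = 0) {N : Set W} (hN : N ∈ 𝓝 p) :
    ∃ q ∈ (sphere 0 1 ∩ realHyperplane u) ∩ N, footPoint u q ≠ 0 := by
  obtain ⟨z, hz, hz0⟩ : ∃ z ∈ (ℂ ∙ u)ᗮ, z ≠ 0 := by
    refine exists_mem_ne_zero_of_ne_bot fun h ↦ ?_
    have h₂ := finrank_add_finrank_orthogonal (ℂ ∙ u)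
    rw [finrank_span_singleton (norm_ne_zero_iff.1 (by simp [hu])), h, finrank_bot] at h₂
    omega
  rw [mem_orthogonal_singleton_iff_inner_right] at hz
  have hzT : z ∈ TangentSet (sphere 0 1 ∩ realHyperplane u) p := by
    refine mem_tangentSet_sphere_inter hp (by simp [mem_realHyperplane, hz]) ?_
    rw [real_inner_eq_re_inner ℂ, ← inner_footPoint_left hz, hp0, inner_zero_left]
    rfl
  -- a curve in the sphere leaving `p` in the direction `z ⊥ u` moves the foot point off `0`
  obtain ⟨γ, hγ0, hγ, hγS⟩ := hzT
  have hfoot : footPoint u z = z := by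
    simp [footPoint, real_inner_eq_re_inner ℂ, hz]
  have hne := (hγ.footPoint (u := u)).eventually_ne (c := 0) (by rwa [hfoot])
  have hN' : ∀ᶠ t in 𝓝 (0 : ℝ), γ t ∈ N :=
    hγ.continuousAt.tendsto.eventually (hγ0 ▸ hN)
  obtain ⟨t, ⟨htS, htN⟩, ht⟩ :=
    (((hγS.and hN').filter_mono nhdsWithin_le_nhds).and hne).exists
  exact ⟨γ t, ⟨htS, htN⟩, ht⟩

theorem crSingularSet_sphere_inter_realHyperplane [FiniteDimensional ℂ W]
    (hW : 1 < finrank ℂ W) (hu : ‖u‖ = 1) :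
    crSingularSet (sphere (0 : W) 1 ∩ realHyperplane u) = {u, -u} := by
  ext p
  constructor
  · rintro ⟨hpS, hnot⟩
    by_contra hp
    exact hnot (isCRNear_of_footPoint_ne_zero hu (mt (footPoint_eq_zero_iff hu hpS.1).1 hp))
  · intro hp
    have hpS : p ∈ sphere (0 : W) 1 ∩ realHyperplane u := by
      rcases hp with rfl | rfl <;> simp [mem_realHyperplane, inner_self_eq_norm_sq_to_K, hu]
    have hp0 : footPoint u p = 0 := (footPoint_eq_zero_iff hu hpS.1).2 hp
    refine ⟨hpS, fun ⟨N, hN, m, hm⟩ ↦ ?_⟩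
    obtain ⟨q, hq, hq0⟩ := exists_mem_footPoint_ne_zero hW hu hpS hp0 hN
    have hp' := crDimAt_sphere_inter_realHyperplane hu hpS
    have hq' := crDimAt_sphere_inter_realHyperplane hu hq.1
    rw [hp0, span_zero_singleton, finrank_bot] at hp'
    rw [finrank_span_singleton hq0] at hq'
    have := hm p ⟨hpS, mem_of_mem_nhds hN⟩
    have := hm q hq
    omega

end SphereCR

section LeviFlat

variable {V : Type*} [NormedAddCommGroup V] [NormedSpace ℂ V]

lemma wdir_ofReal_clm_eq (L : V →L[ℝ] ℝ) (w p q : V) :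
    wdir (fun y ↦ (L y : ℂ)) w p = wdir (fun y ↦ (L y : ℂ)) w q := by
  have h : ∀ x, fderiv ℝ (fun y ↦ (L y : ℂ)) x = Complex.ofRealCLM.comp L :=
    fun _ ↦ (Complex.ofRealCLM.comp L).fderiv
  simp only [wdir, h]

lemma isLeviFlat_inter_ker {O : Set V} (hO : IsOpen O) (L : V →L[ℝ] ℝ) (hL : L ≠ 0) :
    IsLeviFlat (O ∩ {x | L x = 0}) := by
  intro p hp
  refine ⟨O, hO, hp.1, L, L.contDiff.contDiffOn, fun _ _ ↦ by rwa [L.fderiv], ?_,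
    fun x _ w _ ↦ ?_⟩
  · ext x
    simp [and_comm]
  · have hconst : (fun q ↦ wdir (fun y ↦ (L y : ℂ)) w q) =
        fun _ ↦ wdir (fun y ↦ (L y : ℂ)) w 0 :=
      funext fun q ↦ wdir_ofReal_clm_eq L w q 0
    rw [wdirBar, hconst, fderiv_fun_const]
    simp

end LeviFlat

section Model

open Metric Module InnerProductSpace

attribute [local instance] InnerProductSpace.complexToReal

variable {n : ℕ}

def modelSphere (n : ℕ) : Set ((Fin n → ℂ) × ℂ) :=
  {p | p.2.im = 0 ∧ (∑ j, ‖p.1 j‖ ^ 2) + p.2.re ^ 2 = 1}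

def modelBall (n : ℕ) : Set ((Fin n → ℂ) × ℂ) :=
  {p | p.2.im = 0 ∧ (∑ j, ‖p.1 j‖ ^ 2) + p.2.re ^ 2 ≤ 1}

/-- The ambient `(Fin n → ℂ) × ℂ` carries the sup norm; the Hermitian structure in which `M` and
`H` are a unit sphere and ball lives on `WithLp 2 (EuclideanSpace ℂ (Fin n) × ℂ)`. -/
def modelEquiv (n : ℕ) : ((Fin n → ℂ) × ℂ) ≃L[ℂ] WithLp 2 (EuclideanSpace ℂ (Fin n) × ℂ) :=
  ((EuclideanSpace.equiv (Fin n) ℂ).symm.prodCongr (ContinuousLinearEquiv.refl ℂ ℂ)).trans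
    (WithLp.prodContinuousLinearEquiv 2 ℂ _ _).symm

def modelPole (n : ℕ) : WithLp 2 (EuclideanSpace ℂ (Fin n) × ℂ) := modelEquiv n (0, 1)

lemma inner_modelPole (y : (Fin n → ℂ) × ℂ) : ⟪modelPole n, modelEquiv n y⟫_ℂ = y.2 := by
  simp [modelPole, modelEquiv]

lemma norm_modelEquiv_sq (x : (Fin n → ℂ) × ℂ) :
    ‖modelEquiv n x‖ ^ 2 = ∑ j, ‖x.1 j‖ ^ 2 + ‖x.2‖ ^ 2 := by
  simp [modelEquiv, WithLp.prod_norm_sq_eq_of_L2, EuclideanSpace.norm_eq,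
    Real.sq_sqrt (Finset.sum_nonneg fun j _ ↦ sq_nonneg ‖x.1 j‖)]

lemma finrank_model : finrank ℂ (WithLp 2 (EuclideanSpace ℂ (Fin n) × ℂ)) = n + 1 := by
  rw [← (modelEquiv n).toLinearEquiv.finrank_eq, finrank_prod, finrank_fin_fun, finrank_self]

lemma norm_modelPole : ‖modelPole n‖ = 1 := by
  rw [← pow_eq_one_iff_of_nonneg (norm_nonneg _) two_ne_zero, modelPole, norm_modelEquiv_sq]
  simp

lemma finrank_realHyperplane_modelPole : finrank ℝ (realHyperplane (modelPole n)) = 2 * n + 1 := by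
  rw [finrank_realHyperplane (norm_ne_zero_iff.1 (by simp [norm_modelPole])), finrank_model]
  omega

lemma preimage_modelEquiv_realHyperplane :
    modelEquiv n ⁻¹' realHyperplane (modelPole n) = {x | x.2.im = 0} := by
  ext x
  rw [mem_preimage, SetLike.mem_coe, mem_realHyperplane, inner_modelPole]
  rfl

lemma norm_modelEquiv_sq_of_im_eq_zero {x : (Fin n → ℂ) × ℂ} (hx : x.2.im = 0) :
    ‖modelEquiv n x‖ ^ 2 = ∑ j, ‖x.1 j‖ ^ 2 + x.2.re ^ 2 := by
  rw [norm_modelEquiv_sq, Complex.sq_norm, Complex.normSq_apply, hx]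
  ring

lemma preimage_modelEquiv_sphere_inter :
    modelEquiv n ⁻¹' (sphere 0 1 ∩ realHyperplane (modelPole n)) = modelSphere n := by
  ext x
  rw [preimage_inter, mem_inter_iff, preimage_modelEquiv_realHyperplane, modelSphere,
    mem_ofPred_eq, mem_ofPred_eq, and_comm]
  refine and_congr_right fun hx ↦ ?_
  rw [mem_preimage, mem_sphere_zero_iff_norm, ← norm_modelEquiv_sq_of_im_eq_zero hx,
    pow_eq_one_iff_of_nonneg (norm_nonneg _) two_ne_zero]

lemma preimage_modelEquiv_closedBall_inter :
    modelEquiv n ⁻¹' (closedBall 0 1 ∩ realHyperplane (modelPole n)) = modelBall n := by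
  ext x
  rw [preimage_inter, mem_inter_iff, preimage_modelEquiv_realHyperplane, modelBall,
    mem_ofPred_eq, mem_ofPred_eq, and_comm]
  refine and_congr_right fun hx ↦ ?_
  rw [mem_preimage, mem_closedBall_zero_iff, ← norm_modelEquiv_sq_of_im_eq_zero hx,
    sq_le_one_iff₀ (norm_nonneg _)]

lemma isCompact_modelSphere : IsCompact (modelSphere n) := by
  rw [← preimage_modelEquiv_sphere_inter]
  exact (modelEquiv n).toHomeomorph.isCompact_preimage.2
    ((isCompact_sphere 0 1).inter_right (realHyperplane _).closed_of_finiteDimensional)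

lemma isCompact_modelBall : IsCompact (modelBall n) := by
  rw [← preimage_modelEquiv_closedBall_inter]
  exact (modelEquiv n).toHomeomorph.isCompact_preimage.2
    ((isCompact_closedBall 0 1).inter_right (realHyperplane _).closed_of_finiteDimensional)

lemma isAnalyticSubmanifold_modelSphere : IsAnalyticSubmanifold (2 * n) (modelSphere n) := by
  have h := (isAnalyticSubmanifold_sphere_inter norm_modelPole
    (self_mem_realHyperplane _)).preimage
    ((modelEquiv n).toLinearEquiv.restrictScalars ℝ).toContinuousLinearEquiv
  change IsAnalyticSubmanifold _ (modelEquiv n ⁻¹' _) at h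
  rwa [finrank_realHyperplane_modelPole, preimage_modelEquiv_sphere_inter] at h

lemma isAnalyticSubmanifoldWithBoundary_modelBall :
    IsAnalyticSubmanifoldWithBoundary (2 * n + 1) (modelBall n) (modelSphere n) := by
  have h := (isAnalyticSubmanifoldWithBoundary_closedBall_inter norm_modelPole
    (self_mem_realHyperplane _)).preimage
    ((modelEquiv n).toLinearEquiv.restrictScalars ℝ).toContinuousLinearEquiv
  change IsAnalyticSubmanifoldWithBoundary _ (modelEquiv n ⁻¹' _) (modelEquiv n ⁻¹' _) at h
  rwa [finrank_realHyperplane_modelPole, preimage_modelEquiv_sphere_inter,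
    preimage_modelEquiv_closedBall_inter] at h

lemma crSingularSet_modelSphere (hn : 1 ≤ n) :
    crSingularSet (modelSphere n) = {((0 : Fin n → ℂ), (1 : ℂ)), ((0 : Fin n → ℂ), (-1 : ℂ))} := by
  rw [← preimage_modelEquiv_sphere_inter, crSingularSet_preimage,
    crSingularSet_sphere_inter_realHyperplane (by rw [finrank_model]; omega) norm_modelPole]
  ext x
  simp [modelPole, ← map_neg, (modelEquiv n).injective.eq_iff]

lemma isLeviFlat_modelBall_diff_modelSphere : IsLeviFlat (modelBall n \ modelSphere n) := by
  rw [← preimage_modelEquiv_sphere_inter, ← preimage_modelEquiv_closedBall_inter,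
    ← preimage_sdiff, ← inter_sdiff_distrib_right, closedBall_sdiff_sphere, preimage_inter,
    preimage_modelEquiv_realHyperplane]
  exact isLeviFlat_inter_ker (isOpen_ball.preimage (modelEquiv n).continuous)
    (Complex.imCLM.comp (ContinuousLinearMap.snd ℝ _ _))
    (DFunLike.ne_iff.2 ⟨(0, Complex.I), by simp⟩)

end Model

/-- In `ℂ^n × ℂ`, the manifold `M = {Im w = 0, ‖z‖² + (Re w)² = 1}` is a compact real
analytic submanifold of codimension 2 whose CR singular points are exactly `(0, ±1)`,
and `H = {Im w = 0, ‖z‖² + (Re w)² ≤ 1}` is a compact Levi-flat real analytic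
hypersurface with boundary `M`. -/
theorem model_example {n : ℕ} (hn : 1 ≤ n)
    (M H : Set ((Fin n → ℂ) × ℂ))
    (hM : M = {p | p.2.im = 0 ∧ (∑ j, ‖p.1 j‖ ^ 2) + p.2.re ^ 2 = 1})
    (hH : H = {p | p.2.im = 0 ∧ (∑ j, ‖p.1 j‖ ^ 2) + p.2.re ^ 2 ≤ 1}) :
    IsCompact M ∧ IsAnalyticSubmanifold (2 * n) M ∧
    crSingularSet M = {((0 : Fin n → ℂ), (1 : ℂ)), ((0 : Fin n → ℂ), (-1 : ℂ))} ∧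
    IsCompact H ∧ IsAnalyticSubmanifoldWithBoundary (2 * n + 1) H M ∧
    IsLeviFlat (H \ M) := by
  subst hM hH
  exact ⟨isCompact_modelSphere, isAnalyticSubmanifold_modelSphere, crSingularSet_modelSphere hn,
    isCompact_modelBall, isAnalyticSubmanifoldWithBoundary_modelBall,
    isLeviFlat_modelBall_diff_modelSphere⟩

end Example

end
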